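/- arXiv:math/9809196 — 2 statements merged into one kernel-verified Lean document; each statement's English description precedes it below -/
import Mathlib

section
/- If T₁ ≈_α T₂ for well-founded trees T₁, T₂, then either Dp(T₁) = Dp(T₂), or both Dp(T₁) ≥ α and Dp(T₂) ≥ α. -/
/-- A well-founded tree: a strict partial order with a minimum (the root),
in which the predecessors of any element are linearly ordered, and whose
order has no infinite ascending chains (the reverse order is well-founded). -/
structure WFTree : Type 1 where
  A : Type
  lt : A → A → Prop
  trans : ∀ {a b c : A}, lt a b → lt b c → lt a c
  irrefl : ∀ a : A, ¬ lt a a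
  root : A
  root_min : ∀ x : A, x ≠ root → lt root x
  pred_linear : ∀ {x y z : A}, lt x z → lt y z → (lt x y ∨ x = y ∨ lt y x)
  wf : WellFounded fun a b => lt b a

namespace WFTree

/-- `y` is an immediate successor of `x`. -/
def Succ (T : WFTree) (x y : T.A) : Prop :=
  T.lt x y ∧ ∀ z, T.lt x z → ¬ T.lt z y

/-- The depth `Dp_T(x)` of a vertex: `sup { Dp_T(y) + 1 : y an immediate successor of x }`. -/
noncomputable def dp (T : WFTree) : T.A → Ordinal :=
  T.wf.fix fun x ih => ⨆ y : {y // T.Succ x y}, ih y.1 y.2.1 + 1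

/-- The depth of the tree, `Dp(T) = Dp_T(rt(T))`. -/
noncomputable def Dp (T : WFTree) : Ordinal := T.dp T.root

/-- The subtree `T[x]` of all elements `≥ x`, with root `x`. -/
def subtree (T : WFTree) (x : T.A) : WFTree where
  A := {y // y = x ∨ T.lt x y}
  lt a b := T.lt a.1 b.1
  trans h1 h2 := T.trans h1 h2
  irrefl a := T.irrefl a.1
  root := ⟨x, Or.inl rfl⟩
  root_min := by
    rintro ⟨y, hy⟩ hne
    rcases hy with rfl | h
    · exact absurd rfl hne
    · exact h
  pred_linear := by
    intro a b c h1 h2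
    rcases T.pred_linear h1 h2 with h | h | h
    · exact Or.inl h
    · exact Or.inr (Or.inl (Subtype.ext h))
    · exact Or.inr (Or.inr h)
  wf := InvImage.wf Subtype.val T.wf

end WFTree

/-- The back-and-forth equivalence `T₁ ≈_α T₂` between well-founded trees, defined by
recursion on `α`: `T₁ ≈_0 T₂` always, and for `α ≠ 0`, `T₁ ≈_α T₂` iff for every `β < α`
every immediate successor of the root of `T₁` has a `≈_β`-partner among the immediate
successors of the root of `T₂`, and symmetrically. -/
def TreeEquiv (α : Ordinal) (T₁ T₂ : WFTree) : Prop :=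
  ∀ β : Ordinal, β < α →
    (∀ x₁, T₁.Succ T₁.root x₁ →
      ∃ x₂, T₂.Succ T₂.root x₂ ∧ TreeEquiv β (T₁.subtree x₁) (T₂.subtree x₂)) ∧
    (∀ x₂, T₂.Succ T₂.root x₂ →
      ∃ x₁, T₁.Succ T₁.root x₁ ∧ TreeEquiv β (T₂.subtree x₂) (T₁.subtree x₁))
termination_by α
decreasing_by all_goals assumption

/-!
By induction on `α`, `min (Dp T₁) α ≤ Dp T₂`: if `β < Dp T₁` and `β < α`, some child `x₁` of the
root has `β ≤ Dp T₁[x₁]`; its `≈_β`-partner `x₂` then has `β ≤ Dp T₂[x₂]` by the induction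
hypothesis, so `β < Dp T₂`. By symmetry `min (Dp T₁) α = min (Dp T₂) α`, which is the claim.
-/

universe u v

theorem eq_or_le_and_le_of_min_eq {α : Type*} [LinearOrder α] {a b c : α}
    (h : min a c = min b c) : a = b ∨ (c ≤ a ∧ c ≤ b) := by
  rcases le_total c a with hca | hac <;> rcases le_total c b with hcb | hbc
  · exact Or.inr ⟨hca, hcb⟩
  all_goals simp_all

theorem Ordinal.lift_iSup_of_small {ι : Type*} [Small.{u} ι] (f : ι → Ordinal.{u}) :
    Ordinal.lift.{v} (⨆ i, f i) = ⨆ i, Ordinal.lift.{v} (f i) := by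
  have : Small.{max u v} ι := small_lift ι
  have hle : ⨆ i, Ordinal.lift.{v} (f i) ≤ Ordinal.lift.{v} (⨆ i, f i) :=
    Ordinal.iSup_le fun i => Ordinal.lift_le.mpr (Ordinal.le_iSup f i)
  obtain ⟨c, hc⟩ := Ordinal.mem_range_lift_of_le hle
  refine le_antisymm ?_ hle
  rw [← hc, Ordinal.lift_le]
  refine Ordinal.iSup_le fun i => ?_
  rw [← Ordinal.lift_le.{v}, hc]
  exact Ordinal.le_iSup (fun i => Ordinal.lift.{v} (f i)) i

namespace WFTree

variable (T : WFTree)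

theorem dp_eq (x : T.A) : T.dp x = ⨆ y : {y // T.Succ x y}, T.dp y.1 + 1 :=
  T.wf.fix_eq _ x

theorem lt_dp_iff {x : T.A} {β : Ordinal} : β < T.dp x ↔ ∃ y, T.Succ x y ∧ β ≤ T.dp y := by
  simp only [dp_eq T x, Ordinal.lt_iSup_iff, Order.lt_add_one_iff, Subtype.exists, exists_prop]

theorem lift_dp (x : T.A) : Ordinal.lift.{v} (T.dp.{u} x) = T.dp.{max u v} x := by
  induction x using T.wf.induction with
  | _ x ih =>
    rw [dp_eq, dp_eq, Ordinal.lift_iSup_of_small]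
    congr! 2 with y
    rw [Ordinal.lift_add, Ordinal.lift_one, ih y.1 y.2.1]

theorem lift_Dp : Ordinal.lift.{v} T.Dp.{u} = T.Dp.{max u v} :=
  T.lift_dp T.root

variable {T}

-- `Dp` is universe polymorphic, and the two disjuncts of the theorem live in unrelated universes.
theorem Dp_eq_Dp_of_eq_univ {T' : WFTree} (h : T.Dp.{u} = T'.Dp.{u}) : T.Dp.{v} = T'.Dp.{v} := by
  rw [← lift_Dp.{0, u}, ← lift_Dp.{0, u} T', Ordinal.lift_inj] at h
  rw [← lift_Dp.{0, v}, ← lift_Dp.{0, v} T', h]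

theorem mem_subtree_of_lt {x y z : T.A} (hy : y = x ∨ T.lt x y) (hz : T.lt y z) :
    z = x ∨ T.lt x z :=
  Or.inr (hy.elim (· ▸ hz) (T.trans · hz))

theorem succ_subtree_iff {x : T.A} {y z : (T.subtree x).A} :
    (T.subtree x).Succ y z ↔ T.Succ y.1 z.1 :=
  ⟨fun h => ⟨h.1, fun w hw => h.2 ⟨w, mem_subtree_of_lt y.2 hw⟩ hw⟩,
    fun h => ⟨h.1, fun w hw => h.2 w.1 hw⟩⟩

theorem dp_subtree {x : T.A} (z : (T.subtree x).A) : (T.subtree x).dp z = T.dp z.1 := by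
  induction z using (T.subtree x).wf.induction with
  | _ z ih =>
    rw [dp_eq, dp_eq]
    refine Function.Surjective.iSup_congr
      (fun y => ⟨y.1.1, succ_subtree_iff.mp y.2⟩) ?_ fun y => by rw [ih y.1 y.2.1]
    rintro ⟨y, hy⟩
    exact ⟨⟨⟨y, mem_subtree_of_lt z.2 hy.1⟩, succ_subtree_iff.mpr hy⟩, rfl⟩

theorem Dp_subtree (x : T.A) : (T.subtree x).Dp = T.dp x :=
  dp_subtree _

end WFTree

theorem TreeEquiv.symm {α : Ordinal} {T₁ T₂ : WFTree} (h : TreeEquiv α T₁ T₂) :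
    TreeEquiv α T₂ T₁ := by
  rw [TreeEquiv] at h ⊢
  exact fun β hβ => (h β hβ).symm

theorem TreeEquiv.min_Dp_le {α : Ordinal} {T₁ T₂ : WFTree} (h : TreeEquiv α T₁ T₂) :
    min T₁.Dp α ≤ T₂.Dp := by
  induction α using WellFoundedLT.induction generalizing T₁ T₂ with
  | _ α ih =>
    refine le_of_forall_lt fun β hβ => ?_
    obtain ⟨hβT₁, hβα⟩ := lt_min_iff.mp hβ
    obtain ⟨x₁, hx₁, hβx₁⟩ := T₁.lt_dp_iff.mp hβT₁
    rw [TreeEquiv] at h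
    obtain ⟨x₂, hx₂, hx₁x₂⟩ := (h β hβα).1 x₁ hx₁
    have hβx₂ := ih β hβα hx₁x₂
    rw [WFTree.Dp_subtree, WFTree.Dp_subtree, min_eq_right hβx₁] at hβx₂
    exact T₂.lt_dp_iff.mpr ⟨x₂, hx₂, hβx₂⟩

theorem TreeEquiv.min_Dp_eq {α : Ordinal} {T₁ T₂ : WFTree} (h : TreeEquiv α T₁ T₂) :
    min T₁.Dp α = min T₂.Dp α :=
  le_antisymm (le_min h.min_Dp_le (min_le_right _ _))
    (le_min h.symm.min_Dp_le (min_le_right _ _))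

/-- if `T₁ ≈_α T₂` then either `Dp(T₁) = Dp(T₂)`, or both depths
are at least `α`. -/
theorem treeEquiv_depth (α : Ordinal) (T₁ T₂ : WFTree) (h : TreeEquiv α T₁ T₂) :
    T₁.Dp = T₂.Dp ∨ (α ≤ T₁.Dp ∧ α ≤ T₂.Dp) :=
  (eq_or_le_and_le_of_min_eq h.min_Dp_eq).imp_left WFTree.Dp_eq_Dp_of_eq_univ
end

section
/- Let J be an ℵ₁-complete ideal on κ and f : κ → Ord with Galvin–Hajnal rank ∥f∥_J = γ*. Then for every strictly decreasing sequence η of ordinals below γ* one can choose functions f_η : κ → Ord such that: f_⟨⟩ = f; whenever η⌢⟨i⟩ is a strictly decreasing sequence of ordinals < γ*, f_{η⌢⟨i⟩} <_J f_η, f_{η⌢⟨i⟩}(ζ) < f_η(ζ) or f_{η⌢⟨i⟩}(ζ) = f_η(ζ) = 0 for every ζ < κ, and ∥f_{η⌢⟨i⟩}∥_J ≥ i. -/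
set_option linter.deprecated false

/-- An `ℵ₁`-complete (σ-complete) proper ideal on (the underlying set of) `ι`:
a collection of subsets closed under subsets and countable unions, not
containing the whole set. -/
structure SigmaIdeal (ι : Type) where
  sets : Set (Set ι)
  subset_mem : ∀ ⦃s t : Set ι⦄, s ⊆ t → t ∈ sets → s ∈ sets
  iUnion_mem : ∀ f : ℕ → Set ι, (∀ n, f n ∈ sets) → (⋃ n, f n) ∈ sets
  empty_mem : ∅ ∈ sets
  univ_not_mem : Set.univ ∉ sets

namespace SigmaIdeal

variable {ι : Type}

theorem union_mem (J : SigmaIdeal ι) {s t : Set ι} (hs : s ∈ J.sets)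
    (ht : t ∈ J.sets) : s ∪ t ∈ J.sets := by
  have := J.iUnion_mem (fun n => if n = 0 then s else t)
    (by intro n; split <;> assumption)
  refine J.subset_mem ?_ this
  intro i hi
  rcases hi with hi | hi
  · exact Set.mem_iUnion.2 ⟨0, by simpa using hi⟩
  · exact Set.mem_iUnion.2 ⟨1, by simpa using hi⟩

/-- `g <_J f` iff `{i : g i ≥ f i} ∈ J`. -/
def ltJ (J : SigmaIdeal ι) (g f : ι → Ordinal) : Prop :=
  {i | f i ≤ g i} ∈ J.sets

instance (J : SigmaIdeal ι) : IsStrictOrder (ι → Ordinal) J.ltJ where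
  irrefl := fun f hf => by
    have hf' : {i | f i ≤ f i} ∈ J.sets := hf
    have he : {i | f i ≤ f i} = Set.univ := by ext i; simp
    exact J.univ_not_mem (he ▸ hf')
  trans := by
    intro a b c hab hbc
    refine J.subset_mem ?_ (J.union_mem hab hbc)
    intro i (hi : c i ≤ a i)
    rcases le_or_gt (b i) (a i) with h | h
    · exact Or.inl h
    · rcases le_or_gt (c i) (b i) with h' | h'
      · exact Or.inr h'
      · exact absurd (hi.trans_lt (h.trans h')) (lt_irrefl _)

/-- σ-completeness of `J` makes `<_J` well-founded (no infinite
`<_J`-descending sequences). -/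
theorem ltJ_wf (J : SigmaIdeal ι) : WellFounded J.ltJ := by
  rw [RelEmbedding.wellFounded_iff_isEmpty]
  constructor
  intro e
  have hmem : ∀ n : ℕ, {i | e n i ≤ e (n + 1) i} ∈ J.sets := fun n =>
    (e.map_rel_iff.2 (Nat.lt_succ_self n) : J.ltJ (e (n + 1)) (e n))
  have hU : (⋃ n, {i | e n i ≤ e (n + 1) i}) ∈ J.sets := J.iUnion_mem _ hmem
  have hne : (⋃ n, {i | e n i ≤ e (n + 1) i}) ≠ Set.univ := fun h =>
    J.univ_not_mem (h ▸ hU)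
  obtain ⟨i, hi⟩ := (Set.ne_univ_iff_exists_notMem _).1 hne
  have hdesc : ∀ n : ℕ, e (n + 1) i < e n i := by
    intro n
    by_contra h
    exact hi (Set.mem_iUnion.2 ⟨n, le_of_not_gt h⟩)
  exact (RelEmbedding.wellFounded_iff_isEmpty.1 Ordinal.lt_wf).false
    (RelEmbedding.natGT (fun n => e n i) hdesc)

/-- The Galvin–Hajnal rank `∥f∥_J` of `f : ι → Ord` modulo `J`, defined by
well-founded recursion on `<_J`: `∥f∥_J = sup {∥g∥_J + 1 : g <_J f}`. -/
noncomputable def rank (J : SigmaIdeal ι) (f : ι → Ordinal) : Ordinal :=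
  ((J.ltJ_wf).apply f).rank

end SigmaIdeal

/-- `η` is a strictly decreasing finite sequence of ordinals below `γ`. -/
def IsDecSeq (γ : Ordinal) (η : List Ordinal) : Prop :=
  η.Chain' (· > ·) ∧ ∀ i ∈ η, i < γ

/-!
Since `∥h∥_J` is the supremum of `∥g∥_J + 1` over `g <_J h`, every `i < ∥h∥_J` is witnessed
by some `g <_J h` with `i ≤ ∥g∥_J`. Replacing `g` by `0` wherever `g ζ ≥ h ζ` changes it only
on a set in `J`, which affects neither `g <_J h` nor the rank, and makes the descent pointwise.
Choosing such a witness for every `h` and `i` and iterating along `η` gives the family: by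
induction along `η`, each new entry `i` is below the rank of the current function.
-/

namespace SigmaIdeal

variable {ι : Type} (J : SigmaIdeal ι)

/-- `g =_J g'`. -/
def EqJ (g g' : ι → Ordinal) : Prop :=
  {ζ | g ζ ≠ g' ζ} ∈ J.sets

variable {J}

theorem EqJ.symm {g g' : ι → Ordinal} (h : J.EqJ g g') : J.EqJ g' g :=
  J.subset_mem (fun _ hζ => Ne.symm hζ) h

theorem EqJ.ltJ_right {b g g' : ι → Ordinal} (h : J.EqJ g g') (hb : J.ltJ b g) :
    J.ltJ b g' := by
  refine J.subset_mem ?_ (J.union_mem hb h)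
  intro ζ (hζ : g' ζ ≤ b ζ)
  by_cases he : g ζ = g' ζ
  · exact Or.inl (he.le.trans hζ)
  · exact Or.inr he

theorem rank_eq_iSup (h : ι → Ordinal) :
    J.rank h = ⨆ g : {g // J.ltJ g h}, Order.succ (J.rank g) :=
  Acc.rank_eq _

theorem rank_lt_rank {g h : ι → Ordinal} (hgh : J.ltJ g h) : J.rank g < J.rank h :=
  Acc.rank_lt_of_rel _ hgh

theorem lt_rank_iff {h : ι → Ordinal} {i : Ordinal} :
    i < J.rank h ↔ ∃ g, J.ltJ g h ∧ i ≤ J.rank g := by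
  refine ⟨fun hi => ?_, fun ⟨g, hgh, hi⟩ => hi.trans_lt (rank_lt_rank hgh)⟩
  rw [rank_eq_iSup, Ordinal.lt_iSup_iff] at hi
  obtain ⟨⟨g, hgh⟩, hi⟩ := hi
  exact ⟨g, hgh, Order.lt_succ_iff.1 hi⟩

theorem rank_le_rank_of_forall_ltJ {g g' : ι → Ordinal}
    (h : ∀ b, J.ltJ b g → J.ltJ b g') : J.rank g ≤ J.rank g' :=
  le_of_forall_lt fun _ hi =>
    let ⟨b, hb, hib⟩ := lt_rank_iff.1 hi
    lt_rank_iff.2 ⟨b, h b hb, hib⟩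

theorem EqJ.rank_eq {g g' : ι → Ordinal} (h : J.EqJ g g') : J.rank g = J.rank g' :=
  le_antisymm (rank_le_rank_of_forall_ltJ fun _ => h.ltJ_right)
    (rank_le_rank_of_forall_ltJ fun _ => h.symm.ltJ_right)

end SigmaIdeal

section truncBelow

variable {ι : Type}

noncomputable def truncBelow (g h : ι → Ordinal) (ζ : ι) : Ordinal :=
  if g ζ < h ζ then g ζ else 0

theorem truncBelow_lt_or (g h : ι → Ordinal) (ζ : ι) :
    truncBelow g h ζ < h ζ ∨ (truncBelow g h ζ = 0 ∧ h ζ = 0) := by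
  unfold truncBelow
  split_ifs with hlt
  · exact Or.inl hlt
  · exact (eq_zero_or_pos (h ζ)).symm.imp_right fun h0 => ⟨rfl, h0⟩

variable {J : SigmaIdeal ι} {g h : ι → Ordinal}

theorem SigmaIdeal.ltJ.eqJ_truncBelow (hgh : J.ltJ g h) : J.EqJ g (truncBelow g h) := by
  refine J.subset_mem (fun ζ hζ => ?_) hgh
  by_contra hlt
  exact hζ (if_pos (not_le.1 hlt)).symm

theorem SigmaIdeal.ltJ.truncBelow_ltJ (hgh : J.ltJ g h) : J.ltJ (truncBelow g h) h := by
  refine J.subset_mem (fun ζ (hζ : h ζ ≤ truncBelow g h ζ) => ?_) hgh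
  show h ζ ≤ g ζ
  unfold truncBelow at hζ
  split_ifs at hζ with hlt
  · exact hζ
  · exact hζ.trans zero_le

end truncBelow

namespace SigmaIdeal

variable {ι : Type} {J : SigmaIdeal ι}

theorem exists_pointwise_descent_of_lt_rank {h : ι → Ordinal} {i : Ordinal}
    (hi : i < J.rank h) :
    ∃ g, J.ltJ g h ∧ (∀ ζ, g ζ < h ζ ∨ (g ζ = 0 ∧ h ζ = 0)) ∧ i ≤ J.rank g := by
  obtain ⟨g, hgh, hig⟩ := lt_rank_iff.1 hi
  exact ⟨truncBelow g h, hgh.truncBelow_ltJ, truncBelow_lt_or g h,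
    hgh.eqJ_truncBelow.rank_eq ▸ hig⟩

end SigmaIdeal

universe u

theorem IsDecSeq.of_append_singleton {γ i : Ordinal} {η : List Ordinal}
    (h : IsDecSeq γ (η ++ [i])) : IsDecSeq γ η :=
  ⟨h.1.left_of_append, fun j hj => h.2 j (List.mem_append_left _ hj)⟩

theorem IsDecSeq.lt_of_append_pair {γ i j : Ordinal} {η : List Ordinal}
    (h : IsDecSeq γ (η ++ [j] ++ [i])) : i < j := by
  simpa using (List.isChain_append.1 h.1).2.2

theorem IsDecSeq.lt_foldl {α : Type*} {r : α → Ordinal.{u}} {next : α → Ordinal.{u} → α}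
    (hnext : ∀ a i, i < r a → i ≤ r (next a i)) {a : α} (η : List Ordinal.{u}) {i : Ordinal.{u}}
    (h : IsDecSeq (r a) (η ++ [i])) : i < r (η.foldl next a) := by
  induction η using List.reverseRecOn generalizing i with
  | nil => exact h.2 i (by simp)
  | append_singleton η j ih =>
    rw [List.foldl_concat]
    exact h.lt_of_append_pair.trans_le (hnext _ j (ih h.of_append_singleton))

/-- for `J` an `ℵ₁`-complete ideal on `κ` and `f : κ → Ord` with
`∥f∥_J = γ*`, there is a family `(f_η)` indexed by strictly decreasing finite
sequences of ordinals `< γ*` such that `f_⟨⟩ = f` and, whenever `η⌢⟨i⟩` is such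
a sequence, `f_{η⌢⟨i⟩} <_J f_η`, at every coordinate `ζ` either
`f_{η⌢⟨i⟩}(ζ) < f_η(ζ)` or `f_{η⌢⟨i⟩}(ζ) = f_η(ζ) = 0`, and
`∥f_{η⌢⟨i⟩}∥_J ≥ i`. -/
theorem exists_rank_witnessing_family {ι : Type} (J : SigmaIdeal ι)
    (f : ι → Ordinal) :
    ∃ F : List Ordinal.{1} → (ι → Ordinal),
      F [] = f ∧
      ∀ (η : List Ordinal.{1}) (i : Ordinal.{1}),
        IsDecSeq (J.rank f) (η ++ [i]) →
          J.ltJ (F (η ++ [i])) (F η) ∧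
          (∀ ζ : ι, F (η ++ [i]) ζ < F η ζ ∨ (F (η ++ [i]) ζ = 0 ∧ F η ζ = 0)) ∧
          i ≤ J.rank (F (η ++ [i])) := by
  choose! next hnext using fun (h : ι → Ordinal) (i : Ordinal) =>
    @SigmaIdeal.exists_pointwise_descent_of_lt_rank _ J h i
  refine ⟨fun η => η.foldl next f, rfl, fun η i hη => ?_⟩
  have hi : i < J.rank (η.foldl next f) :=
    hη.lt_foldl (fun a j hj => (hnext a j hj).2.2) η
  simpa only [List.foldl_concat] using hnext _ i hi
end
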